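/- If N is a normal subgroup of S_ℕ containing the symmetric group S_{[n₀]} on {1,…,n₀} for some n₀ ≥ 5, then N = S_ℕ. -/

import Mathlib

/-- The support of a permutation of `ℕ`. -/
def fsupp (σ : Equiv.Perm ℕ) : Set ℕ := {x | σ x ≠ x}

lemma fsupp_one : fsupp (1 : Equiv.Perm ℕ) = ∅ := by
  ext x; simp [fsupp]

lemma fsupp_mul_subset (a b : Equiv.Perm ℕ) : fsupp (a * b) ⊆ fsupp a ∪ fsupp b := by
  intro x hx
  by_contra hmem
  simp only [Set.mem_union, fsupp, Set.mem_setOf_eq, not_or, not_not] at hmem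
  exact hx (show a (b x) = x by rw [hmem.2, hmem.1])

lemma fsupp_inv (a : Equiv.Perm ℕ) : fsupp a⁻¹ = fsupp a := by
  ext x
  simp only [fsupp, Set.mem_setOf_eq, ne_eq, Equiv.Perm.inv_eq_iff_eq]
  exact not_congr eq_comm

/-- `S_ℕ`, the group of finitely supported permutations of `ℕ`. -/
def SN : Subgroup (Equiv.Perm ℕ) where
  carrier := {σ | (fsupp σ).Finite}
  one_mem' := by
    show (fsupp (1 : Equiv.Perm ℕ)).Finite
    rw [fsupp_one]; exact Set.finite_empty
  mul_mem' := by
    intro a b ha hb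
    exact Set.Finite.subset (Set.Finite.union ha hb) (fsupp_mul_subset a b)
  inv_mem' := by
    intro a ha
    show (fsupp a⁻¹).Finite
    rw [fsupp_inv]; exact ha

/-- `IsSwap σ` means `σ` is a transposition. -/
def IsSwap (σ : Equiv.Perm ℕ) : Prop := ∃ i j, i ≠ j ∧ σ = Equiv.swap i j

/-- `A_ℕ`, the finitary alternating group: finite products of an even number of
transpositions. -/
def AN : Subgroup (Equiv.Perm ℕ) where
  carrier := {σ | ∃ l : List (Equiv.Perm ℕ), (∀ τ ∈ l, IsSwap τ) ∧ Even l.length ∧ σ = l.prod}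
  one_mem' := ⟨[], by simp, by simp, by simp⟩
  mul_mem' := by
    rintro a b ⟨l, hl, hle, rfl⟩ ⟨m, hm, hme, rfl⟩
    refine ⟨l ++ m, ?_, by simpa using hle.add hme, (List.prod_append).symm⟩
    intro τ hτ
    rcases List.mem_append.mp hτ with h | h
    exacts [hl τ h, hm τ h]
  inv_mem' := by
    rintro a ⟨l, hl, hle, rfl⟩
    refine ⟨(l.map fun x => x⁻¹).reverse, ?_, by simpa using hle, ?_⟩
    · intro τ hτ
      simp only [List.mem_reverse, List.mem_map] at hτ
      obtain ⟨σ, hσ, rfl⟩ := hτ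
      obtain ⟨i, j, hij, rfl⟩ := hl σ hσ
      exact ⟨i, j, hij, by simp⟩
    · rw [List.prod_inv_reverse]

/-- The group of finitely supported permutations of `ℕ` supported inside `A`. -/
def SOn (A : Set ℕ) : Subgroup (Equiv.Perm ℕ) where
  carrier := {σ | (fsupp σ).Finite ∧ fsupp σ ⊆ A}
  one_mem' := by
    constructor <;> rw [fsupp_one]
    exacts [Set.finite_empty, Set.empty_subset A]
  mul_mem' := by
    intro a b ha hb
    exact ⟨Set.Finite.subset (Set.Finite.union ha.1 hb.1) (fsupp_mul_subset a b),
      (fsupp_mul_subset a b).trans (Set.union_subset ha.2 hb.2)⟩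
  inv_mem' := by
    intro a ha
    constructor <;> rw [fsupp_inv]
    exacts [ha.1, ha.2]

lemma swap_mem_SN (i j : ℕ) : Equiv.swap i j ∈ SN := by
  have : fsupp (Equiv.swap i j) ⊆ {i, j} := by
    intro x hx
    by_contra hmem
    simp only [Set.mem_insert_iff, Set.mem_singleton_iff, not_or] at hmem
    exact hx (Equiv.swap_apply_of_ne_of_ne hmem.1 hmem.2)
  exact Set.Finite.subset (Set.toFinite _) this

/-- The 3-cycle `(a b c)` sending `a ↦ b ↦ c ↦ a`. -/
def cycle3 (a b c : ℕ) : Equiv.Perm ℕ := Equiv.swap a c * Equiv.swap a b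

lemma cycle3_mem_SN (a b c : ℕ) : cycle3 a b c ∈ SN :=
  mul_mem (swap_mem_SN a c) (swap_mem_SN a b)


/-!
`S_ℕ` is generated by transpositions, and any two transpositions are conjugate by an element of
`S_ℕ`. Since `N` contains the transposition `(1 2)` and is normal, it contains every
transposition, hence all of `S_ℕ`.
-/

open Equiv

-- The conjugator sends `a ↦ i` and `b ↦ j`.
theorem Equiv.swap_eq_conj_swap {α : Type*} [DecidableEq α] {a b i j : α} (hab : a ≠ b)
    (hij : i ≠ j) :
    swap i j = (swap (swap a i b) j * swap a i) * swap a b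
      * (swap (swap a i b) j * swap a i)⁻¹ := by
  have hib : i ≠ swap a i b := by
    simpa only [swap_apply_left] using (swap a i).injective.ne hab
  rw [← swap_apply_apply]
  simp only [Perm.mul_apply, swap_apply_left, swap_apply_of_ne_of_ne hib hij]

lemma fsupp_swap_subset (i j : ℕ) : fsupp (swap i j) ⊆ {i, j} :=
  fun _ hx => (swap_apply_ne_self_iff.mp hx).2

lemma SN_eq_closure_isSwap : SN = Subgroup.closure {σ : Perm ℕ | σ.IsSwap} := by
  ext σ
  exact mem_closure_isSwap'.symm

lemma swap_mem_of_swap_mem {N : Subgroup (Perm ℕ)} (hnormal : ∀ g ∈ SN, ∀ x ∈ N, g * x * g⁻¹ ∈ N)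
    {a b : ℕ} (hab : a ≠ b) (h : swap a b ∈ N) {i j : ℕ} (hij : i ≠ j) : swap i j ∈ N := by
  rw [swap_eq_conj_swap hab hij]
  exact hnormal _ (mul_mem (swap_mem_SN _ _) (swap_mem_SN _ _)) _ h

/-- If a normal subgroup `N` of `S_ℕ` contains `S_{[n₀]}` for some `n₀ ≥ 5`,
then `N = S_ℕ`. -/
theorem normal_subgroup_containing_Sn0 (N : Subgroup (Equiv.Perm ℕ)) (hNS : N ≤ SN)
    (hnormal : ∀ g ∈ SN, ∀ x ∈ N, g * x * g⁻¹ ∈ N)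
    (n₀ : ℕ) (hn₀ : 5 ≤ n₀) (hcontains : SOn (Set.Icc 1 n₀) ≤ N) :
    N = SN := by
  have h12 : swap 1 2 ∈ N := by
    refine hcontains ⟨swap_mem_SN 1 2, (fsupp_swap_subset 1 2).trans ?_⟩
    rintro x (rfl | rfl) <;> simp only [Set.mem_Icc] <;> omega
  refine le_antisymm hNS ?_
  rw [SN_eq_closure_isSwap, Subgroup.closure_le]
  rintro _ ⟨i, j, hij, rfl⟩
  exact swap_mem_of_swap_mem hnormal (by norm_num) h12 hij
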